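/- Conservation of mass and discrete energy inequality for the fully discrete scheme (Lemma 5.2): Let τ > 0 and let (ρ_h^n, m_h^n)_{n≥0} ⊆ Q_h × V_h with ρ_h^n > 0 for all n be generated by the fully discrete scheme. Then for every n ≥ 0: Σ_e ∫_0^{ℓ_e} ρ_h^n dx = Σ_e ∫_0^{ℓ_e} ρ_h^0 dx, and Σ_e ∫_0^{ℓ_e} ( |m_h^n|²/(2ρ_h^n) + P(ρ_h^n) ) dx + τ Σ_{k=1}^n Σ_e ∫_0^{ℓ_e} ( a_e |∂_x m_h^k|²/(ρ_h^k)² + b_e |m_h^k|³/(ρ_h^k)² ) dx ≤ Σ_e ∫_0^{ℓ_e} ( |m_h^0|²/(2ρ_h^0) + P(ρ_h^0) ) dx, where P = P_e on edge e. -/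

import Mathlib

/-!
Mass: testing the continuity equation with `q_h = 1` leaves `Σ_e ∫ ∂ₓ mⁿ`, which telescopes over
each edge to `Σ_e (mⁿ_e(ℓ_e) - mⁿ_e(0))`, the sum over all vertices of the coupling sums; these
vanish for `mⁿ ∈ V_h`.

Energy: test the momentum equation with `v_h = mⁿ` and the continuity equation with
`q_h = P'(ρⁿ) ∈ Q_h`.  The convective terms cancel pointwise, the viscous and friction terms give
exactly the dissipation, and what is left is bounded below by the energy increment thanks to two
pointwise inequalities: the kinetic one is an exact identity up to the squares
`(mⁿ - mⁿ⁻¹)²/(2ρⁿ⁻¹) + (mⁿ)²(ρⁿ - ρⁿ⁻¹)²/(2(ρⁿ)²ρⁿ⁻¹)`, and the potential one is the tangent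
inequality `P(ρⁿ) - P(ρⁿ⁻¹) ≤ P'(ρⁿ)(ρⁿ - ρⁿ⁻¹)` of the convex `P`.  Summing over the time steps
gives the claim.
-/

/-- The network pairing `(u, w)_E = Σ_{e∈E} ∫_0^{ℓ_e} u_e w_e dx` of two families of
functions on the edges of a pipe network. -/
noncomputable def pairE {E : Type} [Fintype E] (ℓ : E → ℝ) (u w : E → ℝ → ℝ) : ℝ :=
  ∑ e, ∫ x in (0 : ℝ)..(ℓ e), u e x * w e x

/-- `q` is piecewise constant on the uniform mesh of `[0, ℓ e]` into `N e` subintervals,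
for every edge `e`.  This is the space `Q_h` of the mixed finite element method
(the value at the right endpoint `ℓ e` is irrelevant). -/
def IsPwConst {E : Type} (N : E → ℕ) (ℓ : E → ℝ) (q : E → ℝ → ℝ) : Prop :=
  ∀ e, ∀ i : ℕ, i < N e →
    ∀ x ∈ Set.Ico ((i : ℝ) * ℓ e / (N e : ℝ)) (((i : ℝ) + 1) * ℓ e / (N e : ℝ)),
      q e x = q e ((i : ℝ) * ℓ e / (N e : ℝ))

/-- `v` is continuous on `[0, ℓ e]` and affine on each subinterval of the uniform mesh
of `[0, ℓ e]` into `N e` subintervals, for every edge `e`. -/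
def IsPwAffine {E : Type} (N : E → ℕ) (ℓ : E → ℝ) (v : E → ℝ → ℝ) : Prop :=
  (∀ e, ContinuousOn (v e) (Set.Icc 0 (ℓ e))) ∧
  (∀ e, ∀ i : ℕ, i < N e → ∃ α β : ℝ,
    ∀ x ∈ Set.Icc ((i : ℝ) * ℓ e / (N e : ℝ)) (((i : ℝ) + 1) * ℓ e / (N e : ℝ)),
      v e x = α * x + β)

/-- The vertex sum `Σ_{e∈E(w)} f_e(w) n_e(w)` at a vertex `w`, where `n_e(w) = -1` if
`w` is the initial vertex `src e`, `n_e(w) = +1` if `w` is the terminal vertex `dst e`,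
and a function `f_e` is evaluated at `src e` as `f e 0` and at `dst e` as `f e (ℓ e)`. -/
noncomputable def vtxSum {V E : Type} [Fintype E] [DecidableEq V]
    (src dst : E → V) (ℓ : E → ℝ) (f : E → ℝ → ℝ) (w : V) : ℝ :=
  ∑ e, ((if dst e = w then f e (ℓ e) else 0) - (if src e = w then f e 0 else 0))

/-- The space `V_h`: continuous piecewise affine families that satisfy the conservative
coupling condition `Σ_{e∈E(w)} v_e(w) n_e(w) = 0` at every vertex `w`. -/
def InVh {V E : Type} [Fintype E] [DecidableEq V]
    (src dst : E → V) (N : E → ℕ) (ℓ : E → ℝ) (v : E → ℝ → ℝ) : Prop :=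
  IsPwAffine N ℓ v ∧ ∀ w : V, vtxSum src dst ℓ v w = 0

/-- The subinterval-wise (broken) spatial derivative of a piecewise affine family `v`:
on the subinterval of the mesh containing `x`, it is the slope of `v e` there. -/
noncomputable def Dx {E : Type} (N : E → ℕ) (ℓ : E → ℝ) (v : E → ℝ → ℝ)
    (e : E) (x : ℝ) : ℝ :=
  let i : ℕ := min (N e - 1) ⌊x * (N e : ℝ) / ℓ e⌋₊
  (v e (((i : ℝ) + 1) * ℓ e / (N e : ℝ)) - v e ((i : ℝ) * ℓ e / (N e : ℝ)))
    * ((N e : ℝ) / ℓ e)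

/-- The nonlinear system of one step of the fully discrete scheme (Problem 5.1) with
time step `τ`, determining the new state `(ρn, mn) ∈ Q_h × V_h` from the old state
`(ρp, mp)`: for all `q_h ∈ Q_h` and all `v_h ∈ V_h`,
`((ρⁿ - ρⁿ⁻¹)/τ, q_h)_E = -(∂ₓ mⁿ, q_h)_E` and
`( (1/ρⁿ⁻¹)(mⁿ-mⁿ⁻¹)/τ - (mⁿ/(2(ρⁿ)²))(ρⁿ-ρⁿ⁻¹)/τ, v_h )_E
  = ( (mⁿ)²/(2(ρⁿ)²) + P'(ρⁿ) - (a/(ρⁿ)²) ∂ₓ mⁿ, ∂ₓ v_h )_E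
    - ( (mⁿ/(2(ρⁿ)²)) ∂ₓ mⁿ + b |mⁿ| mⁿ/(ρⁿ)², v_h )_E`,
with `P_e'(ρ) = c_e γ/(γ-1) ρ^(γ-1)` on edge `e`. -/
def FullDiscStep {V E : Type} [Fintype V] [Fintype E] [DecidableEq V]
    (src dst : E → V) (N : E → ℕ) (ℓ : E → ℝ) (γ : ℝ) (a b c : E → ℝ)
    (τ : ℝ) (ρp mp ρn mn : E → ℝ → ℝ) : Prop :=
  (∀ q : E → ℝ → ℝ, IsPwConst N ℓ q →
      pairE ℓ (fun e x => (ρn e x - ρp e x) / τ) q = -pairE ℓ (Dx N ℓ mn) q) ∧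
  (∀ v : E → ℝ → ℝ, InVh src dst N ℓ v →
      pairE ℓ (fun e x => (1 / ρp e x) * ((mn e x - mp e x) / τ)
          - mn e x / (2 * ρn e x ^ 2) * ((ρn e x - ρp e x) / τ)) v
        = pairE ℓ (fun e x => mn e x ^ 2 / (2 * ρn e x ^ 2)
              + c e * γ / (γ - 1) * ρn e x ^ (γ - 1)
              - a e / ρn e x ^ 2 * Dx N ℓ mn e x) (Dx N ℓ v)
          - pairE ℓ (fun e x => mn e x / (2 * ρn e x ^ 2) * Dx N ℓ mn e x
              + b e * |mn e x| * mn e x / ρn e x ^ 2) v)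

open MeasureTheory Set

section Cells

variable {f g : ℝ → ℝ} {A B : ℝ}

theorem intervalIntegral.integral_congr_Ico (hAB : A ≤ B) (h : EqOn f g (Ico A B)) :
    ∫ x in A..B, f x = ∫ x in A..B, g x :=
  intervalIntegral.integral_congr_Ioo_of_le hAB (h.mono Ioo_subset_Ico_self)

theorem intervalIntegrable_of_eqOn_Ico (hAB : A ≤ B) (hg : ContinuousOn g (Icc A B))
    (h : EqOn f g (Ico A B)) : IntervalIntegrable f volume A B := by
  refine (hg.intervalIntegrable_of_Icc hAB).congr_uIoo fun x hx => (h ?_).symm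
  rw [uIoo_of_le hAB] at hx
  exact Ioo_subset_Ico_self hx

theorem intervalIntegrable_comp_of_cellwise {α β : Type*} [TopologicalSpace β]
    {a : ℕ → ℝ} {n : ℕ} (ha : ∀ i < n, a i ≤ a (i + 1))
    (F : α → β → ℝ) (hF : ∀ z, Continuous (F z)) {p : ℝ → α} {y : ℝ → β}
    (hp : ∀ i < n, ∀ x ∈ Ico (a i) (a (i + 1)), p x = p (a i))
    (hy : ∀ i < n, ContinuousOn y (Icc (a i) (a (i + 1)))) :
    IntervalIntegrable (fun x => F (p x) (y x)) volume (a 0) (a n) :=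
  IntervalIntegrable.trans_iterate fun i hi =>
    intervalIntegrable_of_eqOn_Ico (ha i hi) ((hF (p (a i))).comp_continuousOn (hy i hi))
      fun x hx => by simp only [Function.comp_apply, hp i hi x hx]

end Cells

section EdgeIntegral

variable {E : Type} [Fintype E] {ℓ : E → ℝ} {f g : E → ℝ → ℝ} {I J : ℝ}

noncomputable def edgeIntegral (ℓ : E → ℝ) (f : E → ℝ → ℝ) : ℝ :=
  ∑ e, ∫ x in (0 : ℝ)..ℓ e, f e x

def HasEdgeIntegral (ℓ : E → ℝ) (f : E → ℝ → ℝ) (I : ℝ) : Prop :=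
  (∀ e, IntervalIntegrable (f e) volume 0 (ℓ e)) ∧ edgeIntegral ℓ f = I

namespace HasEdgeIntegral

theorem add (hf : HasEdgeIntegral ℓ f I) (hg : HasEdgeIntegral ℓ g J) :
    HasEdgeIntegral ℓ (fun e x => f e x + g e x) (I + J) :=
  ⟨fun e => (hf.1 e).add (hg.1 e), by
    simp only [edgeIntegral, intervalIntegral.integral_add (hf.1 _) (hg.1 _),
      Finset.sum_add_distrib, ← hf.2, ← hg.2]⟩

theorem sub (hf : HasEdgeIntegral ℓ f I) (hg : HasEdgeIntegral ℓ g J) :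
    HasEdgeIntegral ℓ (fun e x => f e x - g e x) (I - J) :=
  ⟨fun e => (hf.1 e).sub (hg.1 e), by
    simp only [edgeIntegral, intervalIntegral.integral_sub (hf.1 _) (hg.1 _),
      Finset.sum_sub_distrib, ← hf.2, ← hg.2]⟩

theorem const_mul (hf : HasEdgeIntegral ℓ f I) (r : ℝ) :
    HasEdgeIntegral ℓ (fun e x => r * f e x) (r * I) :=
  ⟨fun e => (hf.1 e).const_mul r, by
    simp only [edgeIntegral, intervalIntegral.integral_const_mul, ← Finset.mul_sum, ← hf.2]⟩

theorem mul_const (hf : HasEdgeIntegral ℓ f I) (r : ℝ) :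
    HasEdgeIntegral ℓ (fun e x => f e x * r) (I * r) :=
  ⟨fun e => (hf.1 e).mul_const r, by
    simp only [edgeIntegral, intervalIntegral.integral_mul_const, ← Finset.sum_mul, ← hf.2]⟩

theorem div_const (hf : HasEdgeIntegral ℓ f I) (r : ℝ) :
    HasEdgeIntegral ℓ (fun e x => f e x / r) (I / r) :=
  ⟨fun e => (hf.1 e).div_const r, by
    simp only [edgeIntegral, intervalIntegral.integral_div, ← Finset.sum_div, ← hf.2]⟩

theorem le (hf : HasEdgeIntegral ℓ f I) (hg : HasEdgeIntegral ℓ g J) (hℓ : ∀ e, 0 ≤ ℓ e)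
    (h : ∀ e, ∀ x ∈ Icc 0 (ℓ e), f e x ≤ g e x) : I ≤ J :=
  hf.2 ▸ hg.2 ▸ Finset.sum_le_sum fun e _ =>
    intervalIntegral.integral_mono_on (hℓ e) (hf.1 e) (hg.1 e) (h e)

end HasEdgeIntegral

end EdgeIntegral

section Mesh

variable {E : Type} {N : E → ℕ} {ℓ : E → ℝ} {e : E}

theorem mesh_node_succ (i : ℕ) :
    ((i + 1 : ℕ) : ℝ) * ℓ e / N e = ((i : ℝ) + 1) * ℓ e / N e := by
  push_cast; ring

theorem mesh_node_lt_succ (hN : 0 < N e) (hℓ : 0 < ℓ e) (i : ℕ) :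
    (i : ℝ) * ℓ e / N e < ((i : ℝ) + 1) * ℓ e / N e := by
  have : (0 : ℝ) < N e := by exact_mod_cast hN
  gcongr; linarith

theorem mesh_node_zero : ((0 : ℕ) : ℝ) * ℓ e / N e = 0 := by simp

theorem mesh_node_last (hN : 0 < N e) : ((N e : ℕ) : ℝ) * ℓ e / N e = ℓ e := by
  field_simp

theorem mesh_index_eq (hN : 0 < N e) (hℓ : 0 < ℓ e) {i : ℕ} (hi : i < N e) {x : ℝ}
    (hx : x ∈ Ico ((i : ℝ) * ℓ e / N e) (((i : ℝ) + 1) * ℓ e / N e)) :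
    min (N e - 1) ⌊x * N e / ℓ e⌋₊ = i := by
  have hN' : (0 : ℝ) < N e := by exact_mod_cast hN
  have hx0 : 0 ≤ x := le_trans (by positivity) hx.1
  have hfloor : ⌊x * N e / ℓ e⌋₊ = i := by
    rw [mem_Ico, div_le_iff₀ hN', lt_div_iff₀ hN'] at hx
    rw [Nat.floor_eq_iff (by positivity), le_div_iff₀ hℓ, div_lt_iff₀ hℓ]
    constructor <;> linarith [hx.1, hx.2]
  omega

theorem Dx_eq_of_mem_cell (v : E → ℝ → ℝ) (hN : 0 < N e) (hℓ : 0 < ℓ e) {i : ℕ} (hi : i < N e)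
    {x : ℝ} (hx : x ∈ Ico ((i : ℝ) * ℓ e / N e) (((i : ℝ) + 1) * ℓ e / N e)) :
    Dx N ℓ v e x = (v e (((i : ℝ) + 1) * ℓ e / N e) - v e ((i : ℝ) * ℓ e / N e)) * (N e / ℓ e) := by
  simp only [Dx, mesh_index_eq hN hℓ hi hx]

theorem isPwConst_Dx (v : E → ℝ → ℝ) (hN : ∀ e, 0 < N e) (hℓ : ∀ e, 0 < ℓ e) :
    IsPwConst N ℓ (Dx N ℓ v) := fun e i hi x hx => by
  rw [Dx_eq_of_mem_cell v (hN e) (hℓ e) hi hx,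
    Dx_eq_of_mem_cell v (hN e) (hℓ e) hi ⟨le_rfl, mesh_node_lt_succ (hN e) (hℓ e) i⟩]

theorem intervalIntegrable_comp_mesh {α β : Type*} [TopologicalSpace β] (hN : 0 < N e)
    (hℓ : 0 < ℓ e) (F : α → β → ℝ) (hF : ∀ z, Continuous (F z)) {p : ℝ → α} {y : ℝ → β}
    (hp : ∀ i < N e, ∀ x ∈ Ico ((i : ℝ) * ℓ e / N e) (((i : ℝ) + 1) * ℓ e / N e),
      p x = p ((i : ℝ) * ℓ e / N e))
    (hy : ∀ i < N e, ContinuousOn y (Icc ((i : ℝ) * ℓ e / N e) (((i : ℝ) + 1) * ℓ e / N e))) :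
    IntervalIntegrable (fun x => F (p x) (y x)) volume 0 (ℓ e) := by
  have h := intervalIntegrable_comp_of_cellwise (a := fun i : ℕ => (i : ℝ) * ℓ e / N e)
    (fun i _ => by simpa only [mesh_node_succ] using (mesh_node_lt_succ hN hℓ i).le) F hF
    (by simpa only [mesh_node_succ] using hp) (by simpa only [mesh_node_succ] using hy)
  rwa [mesh_node_zero, mesh_node_last hN] at h

theorem IsPwConst.intervalIntegrable {q : E → ℝ → ℝ} (hq : IsPwConst N ℓ q) (hN : 0 < N e)
    (hℓ : 0 < ℓ e) : IntervalIntegrable (q e) volume 0 (ℓ e) :=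
  intervalIntegrable_comp_mesh hN hℓ (fun z (_ : ℝ) => z) (fun _ => continuous_const)
    (hq e) (fun _ _ => continuousOn_id)

theorem IsPwAffine.continuousOn_cell {v : E → ℝ → ℝ} (hv : IsPwAffine N ℓ v) {i : ℕ}
    (hi : i < N e) :
    ContinuousOn (v e) (Icc ((i : ℝ) * ℓ e / N e) (((i : ℝ) + 1) * ℓ e / N e)) := by
  obtain ⟨α, β, h⟩ := hv.2 e i hi
  exact (continuous_const.mul continuous_id |>.add continuous_const).continuousOn.congr h

theorem integral_Dx (v : E → ℝ → ℝ) (hN : 0 < N e) (hℓ : 0 < ℓ e) :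
    ∫ x in (0 : ℝ)..ℓ e, Dx N ℓ v e x = v e (ℓ e) - v e 0 := by
  set a : ℕ → ℝ := fun i => (i : ℝ) * ℓ e / N e with ha
  have hle : ∀ i, a i ≤ a (i + 1) := fun i => by
    simpa only [ha, mesh_node_succ] using (mesh_node_lt_succ hN hℓ i).le
  have hslope : ∀ i < N e,
      EqOn (Dx N ℓ v e) (fun _ => (v e (a (i + 1)) - v e (a i)) * (N e / ℓ e))
        (Ico (a i) (a (i + 1))) := fun i hi x hx => by
    simp only [ha, mesh_node_succ] at hx ⊢
    exact Dx_eq_of_mem_cell v hN hℓ hi hx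
  have hcell : ∀ i < N e, ∫ x in a i..a (i + 1), Dx N ℓ v e x = v e (a (i + 1)) - v e (a i) := by
    intro i hi
    have hN' : (N e : ℝ) ≠ 0 := by exact_mod_cast hN.ne'
    have hwidth : a (i + 1) - a i = ℓ e / N e := by simp only [ha]; push_cast; ring
    rw [intervalIntegral.integral_congr_Ico (hle i) (hslope i hi), intervalIntegral.integral_const,
      smul_eq_mul, hwidth]
    field_simp
  have hsum := intervalIntegral.sum_integral_adjacent_intervals fun i hi =>
    intervalIntegrable_of_eqOn_Ico (hle i) continuousOn_const (hslope i hi)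
  have h0 : a 0 = 0 := mesh_node_zero
  have hl : a (N e) = ℓ e := mesh_node_last hN
  rw [h0, hl] at hsum
  rw [← hsum, Finset.sum_congr rfl fun i hi => hcell i (Finset.mem_range.1 hi),
    Finset.sum_range_sub (fun i => v e (a i)), h0, hl]

end Mesh

section StepIntegrands

variable {E : Type} {N : E → ℕ} {ℓ : E → ℝ} {ρp mp ρn mn : E → ℝ → ℝ}

theorem intervalIntegrable_comp_step (hN : ∀ e, 0 < N e) (hℓ : ∀ e, 0 < ℓ e)
    (hρp : IsPwConst N ℓ ρp) (hρn : IsPwConst N ℓ ρn) (hmp : IsPwAffine N ℓ mp)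
    (hmn : IsPwAffine N ℓ mn) (e : E) (F : ℝ → ℝ → ℝ → ℝ → ℝ → ℝ)
    (hF : ∀ r s D, Continuous fun y : ℝ × ℝ => F r s D y.1 y.2) :
    IntervalIntegrable (fun x => F (ρn e x) (ρp e x) (Dx N ℓ mn e x) (mn e x) (mp e x))
      volume 0 (ℓ e) :=
  intervalIntegrable_comp_mesh (hN e) (hℓ e) (fun z y => F z.1 z.2.1 z.2.2 y.1 y.2)
    (fun z => hF z.1 z.2.1 z.2.2)
    (p := fun x => (ρn e x, ρp e x, Dx N ℓ mn e x)) (y := fun x => (mn e x, mp e x))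
    (fun i hi x hx => by
      simp only [hρn e i hi x hx, hρp e i hi x hx, isPwConst_Dx mn hN hℓ e i hi x hx])
    (fun _ hi => (hmn.continuousOn_cell hi).prodMk (hmp.continuousOn_cell hi))

end StepIntegrands

section Network

variable {V E : Type} [Fintype V] [Fintype E] [DecidableEq V]

theorem sum_vtxSum (src dst : E → V) (ℓ : E → ℝ) (f : E → ℝ → ℝ) :
    ∑ w, vtxSum src dst ℓ f w = ∑ e, (f e (ℓ e) - f e 0) := by
  simp only [vtxSum]
  rw [Finset.sum_comm]
  simp [Finset.sum_sub_distrib]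

theorem hasEdgeIntegral_Dx {src dst : E → V} {N : E → ℕ} {ℓ : E → ℝ} {v : E → ℝ → ℝ}
    (hN : ∀ e, 0 < N e) (hℓ : ∀ e, 0 < ℓ e)
    (hv : ∀ w, vtxSum src dst ℓ v w = 0) : HasEdgeIntegral ℓ (Dx N ℓ v) 0 :=
  ⟨fun e => (isPwConst_Dx v hN hℓ).intervalIntegrable (hN e) (hℓ e), by
    simp only [edgeIntegral, integral_Dx v (hN _) (hℓ _), ← sum_vtxSum src dst, hv,
      Finset.sum_const_zero]⟩

end Network

theorem rpow_sub_rpow_le_mul_sub {γ r s : ℝ} (hγ : 1 ≤ γ) (hr : 0 < r) (hs : 0 ≤ s) :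
    r ^ γ - s ^ γ ≤ γ * r ^ (γ - 1) * (r - s) := by
  have hx : -1 ≤ s / r - 1 := by linarith [div_nonneg hs hr.le]
  have hbern := one_add_mul_self_le_rpow_one_add hx hγ
  rw [add_sub_cancel, Real.div_rpow hs hr.le, le_div_iff₀ (by positivity)] at hbern
  have hexpand : (1 + γ * (s / r - 1)) * r ^ γ = r ^ γ + γ * (r ^ γ / r) * (s - r) := by
    field_simp
  rw [Real.rpow_sub_one hr.ne']
  linarith

theorem kinetic_increment_le {τ r s M Mb : ℝ} (hτ : τ ≠ 0) (hr : 0 < r) (hs : 0 < s) :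
    M ^ 2 / (2 * r) - Mb ^ 2 / (2 * s)
      ≤ τ * ((1 / s * ((M - Mb) / τ) - M / (2 * r ^ 2) * ((r - s) / τ)) * M) := by
  have hdefect : τ * ((1 / s * ((M - Mb) / τ) - M / (2 * r ^ 2) * ((r - s) / τ)) * M)
      - (M ^ 2 / (2 * r) - Mb ^ 2 / (2 * s))
      = (M - Mb) ^ 2 / (2 * s) + M ^ 2 * (r - s) ^ 2 / (2 * r ^ 2 * s) := by
    field_simp
    ring
  have : 0 ≤ (M - Mb) ^ 2 / (2 * s) + M ^ 2 * (r - s) ^ 2 / (2 * r ^ 2 * s) := by positivity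
  linarith

/-- The continuity equation tested with `P'(ρⁿ)` plus the momentum equation tested with `mⁿ`,
each written as left side minus right side, at a point where `ρⁿ, ρⁿ⁻¹, ∂ₓmⁿ, mⁿ, mⁿ⁻¹` take the
values `r, s, D, M, Mb`. -/
noncomputable def energyTest (γ τ a b c r s D M Mb : ℝ) : ℝ :=
  (1 / s * ((M - Mb) / τ) - M / (2 * r ^ 2) * ((r - s) / τ)) * M
    - ((M ^ 2 / (2 * r ^ 2) + c * γ / (γ - 1) * r ^ (γ - 1) - a / r ^ 2 * D) * D
      - (M / (2 * r ^ 2) * D + b * |M| * M / r ^ 2) * M)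
    + ((r - s) / τ * (c * γ / (γ - 1) * r ^ (γ - 1)) + D * (c * γ / (γ - 1) * r ^ (γ - 1)))

theorem energy_add_dissipation_le {γ τ a b c r s D M Mb : ℝ} (hγ : 1 < γ) (hc : 0 ≤ c)
    (hτ : τ ≠ 0) (hr : 0 < r) (hs : 0 < s) :
    M ^ 2 / (2 * r) + c * r ^ γ / (γ - 1) + τ * (a * D ^ 2 / r ^ 2 + b * |M| ^ 3 / r ^ 2)
      ≤ Mb ^ 2 / (2 * s) + c * s ^ γ / (γ - 1) + τ * energyTest γ τ a b c r s D M Mb := by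
  have hγ' : 0 < γ - 1 := by linarith
  have hkin := kinetic_increment_le (M := M) (Mb := Mb) hτ hr hs
  have hpot : c * r ^ γ / (γ - 1) - c * s ^ γ / (γ - 1)
      ≤ (r - s) * (c * γ / (γ - 1) * r ^ (γ - 1)) := by
    have := mul_le_mul_of_nonneg_left (rpow_sub_rpow_le_mul_sub hγ.le hr hs.le)
      (div_nonneg hc hγ'.le)
    calc c * r ^ γ / (γ - 1) - c * s ^ γ / (γ - 1) = c / (γ - 1) * (r ^ γ - s ^ γ) := by ring
      _ ≤ _ := this
      _ = _ := by ring
  have hsplit : τ * energyTest γ τ a b c r s D M Mb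
      = τ * ((1 / s * ((M - Mb) / τ) - M / (2 * r ^ 2) * ((r - s) / τ)) * M)
        + τ * (a * D ^ 2 / r ^ 2 + b * |M| ^ 3 / r ^ 2)
        + (r - s) * (c * γ / (γ - 1) * r ^ (γ - 1)) := by
    have hcube : |M| ^ 3 = |M| * M ^ 2 := by rw [pow_succ', sq_abs]
    rw [energyTest, hcube]
    field_simp
    ring
  linarith

section Step

variable {V E : Type} [Fintype V] [Fintype E] [DecidableEq V] {src dst : E → V} {N : E → ℕ}
  {ℓ : E → ℝ} {γ τ : ℝ} {a b c : E → ℝ} {ρp mp ρn mn : E → ℝ → ℝ}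

noncomputable def energyDensity (c : E → ℝ) (γ : ℝ) (ρ m : E → ℝ → ℝ) : E → ℝ → ℝ :=
  fun e x => m e x ^ 2 / (2 * ρ e x) + c e * ρ e x ^ γ / (γ - 1)

noncomputable def dissipationDensity (N : E → ℕ) (ℓ : E → ℝ) (a b : E → ℝ) (ρ m : E → ℝ → ℝ) :
    E → ℝ → ℝ :=
  fun e x => a e * Dx N ℓ m e x ^ 2 / ρ e x ^ 2 + b e * |m e x| ^ 3 / ρ e x ^ 2

theorem mass_step (hN : ∀ e, 0 < N e) (hℓ : ∀ e, 0 < ℓ e) (hτ : τ ≠ 0)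
    (hρp : IsPwConst N ℓ ρp) (hρn : IsPwConst N ℓ ρn) (hmn : ∀ w, vtxSum src dst ℓ mn w = 0)
    (hstep : FullDiscStep src dst N ℓ γ a b c τ ρp mp ρn mn) :
    edgeIntegral ℓ ρn = edgeIntegral ℓ ρp := by
  have hρ (ρ : E → ℝ → ℝ) (h : IsPwConst N ℓ ρ) : HasEdgeIntegral ℓ ρ (edgeIntegral ℓ ρ) :=
    ⟨fun e => h.intervalIntegrable (hN e) (hℓ e), rfl⟩
  have hrate := (((hρ ρn hρn).sub (hρ ρp hρp)).div_const τ).mul_const 1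
  have hflux := (hasEdgeIntegral_Dx hN hℓ hmn).mul_const 1
  -- the continuity equation tested with `q_h = 1`
  have h := hrate.2.symm.trans ((hstep.1 _ fun _ _ _ _ _ => rfl).trans (congrArg _ hflux.2))
  rw [zero_mul, neg_zero, mul_one, div_eq_zero_iff, sub_eq_zero] at h
  exact h.resolve_right hτ

theorem hasEdgeIntegral_energyTest (hN : ∀ e, 0 < N e) (hℓ : ∀ e, 0 < ℓ e)
    (hρp : IsPwConst N ℓ ρp) (hρn : IsPwConst N ℓ ρn) (hmp : IsPwAffine N ℓ mp)
    (hmn : InVh src dst N ℓ mn) (hstep : FullDiscStep src dst N ℓ γ a b c τ ρp mp ρn mn) :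
    HasEdgeIntegral ℓ (fun e x => energyTest γ τ (a e) (b e) (c e) (ρn e x) (ρp e x)
      (Dx N ℓ mn e x) (mn e x) (mp e x)) 0 := by
  have hI := intervalIntegrable_comp_step hN hℓ hρp hρn hmp hmn.1
  have hmom := hstep.2 mn hmn
  have hcont := hstep.1 (fun e x => c e * γ / (γ - 1) * ρn e x ^ (γ - 1))
    fun e i hi x hx => by simp only [hρn e i hi x hx]
  have hK : HasEdgeIntegral ℓ _ (pairE ℓ _ mn) := ⟨fun e => hI e
    (fun r s _ M Mb => (1 / s * ((M - Mb) / τ) - M / (2 * r ^ 2) * ((r - s) / τ)) * M)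
    (fun _ _ _ => by fun_prop), rfl⟩
  have hA : HasEdgeIntegral ℓ _ (pairE ℓ _ (Dx N ℓ mn)) := ⟨fun e => hI e
    (fun r _ D M _ => (M ^ 2 / (2 * r ^ 2) + c e * γ / (γ - 1) * r ^ (γ - 1) - a e / r ^ 2 * D) * D)
    (fun _ _ _ => by fun_prop), rfl⟩
  have hB : HasEdgeIntegral ℓ _ (pairE ℓ _ mn) := ⟨fun e => hI e
    (fun r _ D M _ => (M / (2 * r ^ 2) * D + b e * |M| * M / r ^ 2) * M)
    (fun _ _ _ => by fun_prop), rfl⟩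
  have hT : HasEdgeIntegral ℓ _ (pairE ℓ _ _) := ⟨fun e => hI e
    (fun r s _ _ _ => (r - s) / τ * (c e * γ / (γ - 1) * r ^ (γ - 1)))
    (fun _ _ _ => by fun_prop), rfl⟩
  have hU : HasEdgeIntegral ℓ _ (pairE ℓ (Dx N ℓ mn) _) := ⟨fun e => hI e
    (fun r _ D _ _ => D * (c e * γ / (γ - 1) * r ^ (γ - 1)))
    (fun _ _ _ => by fun_prop), rfl⟩
  have h := (hK.sub (hA.sub hB)).add (hT.add hU)
  exact ⟨h.1, h.2.trans (by rw [hmom, hcont]; ring)⟩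

theorem energy_step (hN : ∀ e, 0 < N e) (hℓ : ∀ e, 0 < ℓ e) (hγ : 1 < γ)
    (hc : ∀ e, 0 ≤ c e) (hτ : τ ≠ 0) (hρp : IsPwConst N ℓ ρp) (hρn : IsPwConst N ℓ ρn)
    (hmp : IsPwAffine N ℓ mp) (hmn : InVh src dst N ℓ mn)
    (hposp : ∀ e, ∀ x ∈ Icc 0 (ℓ e), 0 < ρp e x) (hposn : ∀ e, ∀ x ∈ Icc 0 (ℓ e), 0 < ρn e x)
    (hstep : FullDiscStep src dst N ℓ γ a b c τ ρp mp ρn mn) :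
    edgeIntegral ℓ (energyDensity c γ ρn mn) + τ * edgeIntegral ℓ (dissipationDensity N ℓ a b ρn mn)
      ≤ edgeIntegral ℓ (energyDensity c γ ρp mp) := by
  have hI := intervalIntegrable_comp_step hN hℓ hρp hρn hmp hmn.1
  have hEn : HasEdgeIntegral ℓ (energyDensity c γ ρn mn) _ := ⟨fun e => hI e
    (fun r _ _ M _ => M ^ 2 / (2 * r) + c e * r ^ γ / (γ - 1)) (fun _ _ _ => by fun_prop), rfl⟩
  have hEp : HasEdgeIntegral ℓ (energyDensity c γ ρp mp) _ := ⟨fun e => hI e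
    (fun _ s _ _ Mb => Mb ^ 2 / (2 * s) + c e * s ^ γ / (γ - 1)) (fun _ _ _ => by fun_prop), rfl⟩
  have hDn : HasEdgeIntegral ℓ (dissipationDensity N ℓ a b ρn mn) _ := ⟨fun e => hI e
    (fun r _ D M _ => a e * D ^ 2 / r ^ 2 + b e * |M| ^ 3 / r ^ 2) (fun _ _ _ => by fun_prop), rfl⟩
  have hTest := hasEdgeIntegral_energyTest hN hℓ hρp hρn hmp hmn hstep
  simpa using (hEn.add (hDn.const_mul τ)).le (hEp.add (hTest.const_mul τ)) (fun e => (hℓ e).le)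
    fun e x hx => energy_add_dissipation_le hγ (hc e) hτ (hposn e x hx) (hposp e x hx)

end Step

theorem fullydiscrete_mass_conservation_and_energy_inequality_general
    {V E : Type} [Fintype V] [Fintype E] [DecidableEq V]
    (src dst : E → V) (N : E → ℕ) (hN : ∀ e, 1 ≤ N e)
    (ℓ : E → ℝ) (hℓ : ∀ e, 0 < ℓ e)
    (γ : ℝ) (hγ : 1 < γ) (a b c : E → ℝ)
    (hc : ∀ e, 0 < c e)
    (τ : ℝ) (hτ : 0 < τ)
    (ρ m : ℕ → E → ℝ → ℝ)
    (hmem : ∀ n, IsPwConst N ℓ (ρ n) ∧ InVh src dst N ℓ (m n))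
    (hpos : ∀ n e, ∀ x ∈ Set.Icc 0 (ℓ e), 0 < ρ n e x)
    (hstep : ∀ n : ℕ,
      FullDiscStep src dst N ℓ γ a b c τ (ρ n) (m n) (ρ (n + 1)) (m (n + 1))) :
    ∀ n : ℕ,
      ((∑ e, ∫ x in (0 : ℝ)..(ℓ e), ρ n e x)
          = ∑ e, ∫ x in (0 : ℝ)..(ℓ e), ρ 0 e x) ∧
      ((∑ e, ∫ x in (0 : ℝ)..(ℓ e),
          (m n e x ^ 2 / (2 * ρ n e x) + c e * ρ n e x ^ γ / (γ - 1)))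
        + τ * ∑ k ∈ Finset.Icc 1 n, ∑ e, ∫ x in (0 : ℝ)..(ℓ e),
            (a e * Dx N ℓ (m k) e x ^ 2 / ρ k e x ^ 2
              + b e * |m k e x| ^ 3 / ρ k e x ^ 2)
        ≤ ∑ e, ∫ x in (0 : ℝ)..(ℓ e),
            (m 0 e x ^ 2 / (2 * ρ 0 e x) + c e * ρ 0 e x ^ γ / (γ - 1))) := by
  have hmass n : edgeIntegral ℓ (ρ (n + 1)) = edgeIntegral ℓ (ρ n) :=
    mass_step hN hℓ hτ.ne' (hmem n).1 (hmem (n + 1)).1 (hmem (n + 1)).2.2 (hstep n)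
  have henergy n := energy_step hN hℓ hγ (fun e => (hc e).le) hτ.ne' (hmem n).1 (hmem (n + 1)).1
    (hmem n).2.1 (hmem (n + 1)).2 (hpos n) (hpos (n + 1)) (hstep n)
  show ∀ n, edgeIntegral ℓ (ρ n) = edgeIntegral ℓ (ρ 0) ∧
    edgeIntegral ℓ (energyDensity c γ (ρ n) (m n))
      + τ * ∑ k ∈ Finset.Icc 1 n, edgeIntegral ℓ (dissipationDensity N ℓ a b (ρ k) (m k))
      ≤ edgeIntegral ℓ (energyDensity c γ (ρ 0) (m 0))
  intro n
  induction n with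
  | zero => simp
  | succ n ih =>
    refine ⟨(hmass n).trans ih.1, ?_⟩
    rw [Finset.sum_Icc_succ_top (by omega), mul_add]
    linarith [henergy n, ih.2]

/-- **Conservation of mass and discrete energy inequality for the fully discrete scheme
(Lemma 5.2).**  Let `τ > 0` and let `(ρ n, m n) ∈ Q_h × V_h`, `n ≥ 0`, with positive
densities, be generated by the fully discrete scheme.  Then for every `n`:
`Σ_e ∫_0^{ℓ_e} ρⁿ dx = Σ_e ∫_0^{ℓ_e} ρ⁰ dx`, and
`Σ_e ∫_0^{ℓ_e} ( (mⁿ)²/(2ρⁿ) + P(ρⁿ) ) dx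
  + τ Σ_{k=1}^n Σ_e ∫_0^{ℓ_e} ( a_e |∂ₓ mᵏ|²/(ρᵏ)² + b_e |mᵏ|³/(ρᵏ)² ) dx
 ≤ Σ_e ∫_0^{ℓ_e} ( (m⁰)²/(2ρ⁰) + P(ρ⁰) ) dx`,
with `P_e(ρ) = c_e ρ^γ/(γ-1)` on edge `e`. -/
theorem fullydiscrete_mass_conservation_and_energy_inequality
    {V E : Type} [Fintype V] [Fintype E] [DecidableEq V]
    (src dst : E → V) (N : E → ℕ) (hN : ∀ e, 1 ≤ N e)
    (ℓ : E → ℝ) (hℓ : ∀ e, 0 < ℓ e)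
    (γ : ℝ) (hγ : 1 < γ) (a b c : E → ℝ)
    (ha : ∀ e, 0 ≤ a e) (hb : ∀ e, 0 ≤ b e) (hc : ∀ e, 0 < c e)
    (τ : ℝ) (hτ : 0 < τ)
    (ρ m : ℕ → E → ℝ → ℝ)
    (hmem : ∀ n, IsPwConst N ℓ (ρ n) ∧ InVh src dst N ℓ (m n))
    (hpos : ∀ n e, ∀ x ∈ Set.Icc 0 (ℓ e), 0 < ρ n e x)
    (hstep : ∀ n : ℕ,
      FullDiscStep src dst N ℓ γ a b c τ (ρ n) (m n) (ρ (n + 1)) (m (n + 1))) :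
    ∀ n : ℕ,
      ((∑ e, ∫ x in (0 : ℝ)..(ℓ e), ρ n e x)
          = ∑ e, ∫ x in (0 : ℝ)..(ℓ e), ρ 0 e x) ∧
      ((∑ e, ∫ x in (0 : ℝ)..(ℓ e),
          (m n e x ^ 2 / (2 * ρ n e x) + c e * ρ n e x ^ γ / (γ - 1)))
        + τ * ∑ k ∈ Finset.Icc 1 n, ∑ e, ∫ x in (0 : ℝ)..(ℓ e),
            (a e * Dx N ℓ (m k) e x ^ 2 / ρ k e x ^ 2
              + b e * |m k e x| ^ 3 / ρ k e x ^ 2)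
        ≤ ∑ e, ∫ x in (0 : ℝ)..(ℓ e),
            (m 0 e x ^ 2 / (2 * ρ 0 e x) + c e * ρ 0 e x ^ γ / (γ - 1))) :=
  fullydiscrete_mass_conservation_and_energy_inequality_general src dst N hN ℓ hℓ γ hγ a b c hc τ hτ
    ρ m hmem hpos hstep
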